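/- arXiv:2512.08655 — 2 statements merged into one kernel-verified Lean document; each statement's English description precedes it below -/
import Mathlib

section
/- For a smooth positive function ρ on the 3-torus, the Bohm potential identity holds: div(ρ ∇² log ρ) = 2ρ ∇(Δ√ρ / √ρ), where ∇² denotes the Hessian. -/
/-!
Write `ρ = exp L` with `L = log ρ`, so that `√ρ = exp (L / 2)`. By the chain rule
`Δ√ρ / √ρ = Σⱼ ((∂ⱼL)² / 4 + ∂ⱼ∂ⱼL / 2)` and `∂ⱼρ = ρ ∂ⱼL`, so both sides of the identity equal
`ρ Σⱼ (∂ⱼL ∂ᵢ∂ⱼL + ∂ᵢ∂ⱼ∂ⱼL)`; on the left this needs the symmetry `∂ⱼ∂ᵢ∂ⱼL = ∂ᵢ∂ⱼ∂ⱼL`.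
-/

open Real

/-- Partial derivative in direction `i` of a scalar function on `ℝ³` (modeling `𝕋³`). -/
noncomputable def pd (i : Fin 3) (f : (Fin 3 → ℝ) → ℝ) (x : Fin 3 → ℝ) : ℝ :=
  fderiv ℝ f x (Pi.single i 1)

variable {f g L : (Fin 3 → ℝ) → ℝ} {x : Fin 3 → ℝ} {j : Fin 3}

theorem ContDiff.pd {n : WithTop ℕ∞} (hf : ContDiff ℝ (n + 1) f) (j : Fin 3) :
    ContDiff ℝ n (pd j f) :=
  (hf.fderiv_right le_rfl).clm_apply contDiff_const

theorem pd_add (hf : DifferentiableAt ℝ f x) (hg : DifferentiableAt ℝ g x) :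
    pd j (fun y => f y + g y) x = pd j f x + pd j g x := by
  simp [pd, fderiv_fun_add hf hg]

theorem pd_mul (hf : DifferentiableAt ℝ f x) (hg : DifferentiableAt ℝ g x) :
    pd j (fun y => f y * g y) x = pd j f x * g x + f x * pd j g x := by
  simp [pd, fderiv_fun_mul hf hg]
  ring

theorem pd_div_const (hf : DifferentiableAt ℝ f x) (c : ℝ) :
    pd j (fun y => f y / c) x = pd j f x / c := by
  simp [pd, div_eq_mul_inv, fderiv_mul_const hf, mul_comm]

theorem pd_exp (hf : DifferentiableAt ℝ f x) :
    pd j (fun y => exp (f y)) x = exp (f x) * pd j f x := by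
  simp [pd, fderiv_exp hf]

theorem pd_sum {F : Fin 3 → (Fin 3 → ℝ) → ℝ} (hF : ∀ k, DifferentiableAt ℝ (F k) x) :
    pd j (fun y => ∑ k, F k y) x = ∑ k, pd j (F k) x := by
  simp [pd, fderiv_fun_sum fun k _ => hF k]

theorem pd_pd_comm (hf : ContDiff ℝ 2 f) (i j : Fin 3) (x : Fin 3 → ℝ) :
    pd i (pd j f) x = pd j (pd i f) x := by
  have hdf : DifferentiableAt ℝ (fderiv ℝ f) x :=
    ((hf.fderiv_right le_rfl).differentiable one_ne_zero).differentiableAt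
  have hpd_pd : ∀ a b : Fin 3,
      pd a (pd b f) x = fderiv ℝ (fderiv ℝ f) x (Pi.single a 1) (Pi.single b 1) := by
    intro a b
    change fderiv ℝ (fun y => fderiv ℝ f y (Pi.single b 1)) x (Pi.single a 1) = _
    simp [fderiv_clm_apply hdf (differentiableAt_const _)]
  rw [hpd_pd, hpd_pd]
  exact hf.contDiffAt.isSymmSndFDerivAt (by simp) _ _

theorem pd_exp_mul_pd_pd (hL : ContDiff ℝ 3 L) (i j : Fin 3) (x : Fin 3 → ℝ) :
    pd j (fun y => exp (L y) * pd i (pd j L) y) x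
      = exp (L x) * (pd j L x * pd i (pd j L) x + pd i (pd j (pd j L)) x) := by
  have hL' : Differentiable ℝ L := hL.differentiable (by norm_num)
  have hL₂ : ContDiff ℝ 2 (pd j L) := hL.pd (n := 2) j
  have hL₁ : Differentiable ℝ (pd i (pd j L)) := (hL₂.pd i).differentiable one_ne_zero
  rw [pd_mul (hL' x).exp (hL₁ x), pd_exp (hL' x), pd_pd_comm hL₂]
  ring

theorem pd_pd_exp_half (hL : ContDiff ℝ 2 L) (j : Fin 3) (x : Fin 3 → ℝ) :
    pd j (pd j fun z => exp (L z / 2)) x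
      = exp (L x / 2) * (pd j L x ^ 2 / 4 + pd j (pd j L) x / 2) := by
  have hL' : Differentiable ℝ L := hL.differentiable (by norm_num)
  have hpd : Differentiable ℝ (pd j L) := (hL.pd (n := 1) j).differentiable one_ne_zero
  have hfirst : pd j (fun z => exp (L z / 2)) = fun y => exp (L y / 2) * (pd j L y / 2) := by
    ext y
    rw [pd_exp (by fun_prop), pd_div_const (hL' y)]
  rw [hfirst, pd_mul (by fun_prop) (by fun_prop), pd_exp (by fun_prop), pd_div_const (hL' x),
    pd_div_const (hpd x)]
  ring

/-- The Bohm potential `Δ√ρ / √ρ` in terms of `L = log ρ`. -/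
noncomputable def logBohmPotential (L : (Fin 3 → ℝ) → ℝ) (y : Fin 3 → ℝ) : ℝ :=
  ∑ j, (pd j L y ^ 2 / 4 + pd j (pd j L) y / 2)

theorem laplacian_exp_half_div_exp_half (hL : ContDiff ℝ 2 L) :
    (fun y => (∑ j, pd j (pd j fun z => exp (L z / 2)) y) / exp (L y / 2))
      = logBohmPotential L := by
  ext y
  simp_rw [pd_pd_exp_half hL, ← Finset.mul_sum]
  exact mul_div_cancel_left₀ _ (exp_pos _).ne'

theorem pd_logBohmPotential (hL : ContDiff ℝ 3 L) (i : Fin 3) (x : Fin 3 → ℝ) :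
    pd i (logBohmPotential L) x
      = (∑ j, (pd j L x * pd i (pd j L) x + pd i (pd j (pd j L)) x)) / 2 := by
  have hL₁ : ∀ j, Differentiable ℝ (pd j L) :=
    fun j => (hL.pd (n := 2) j).differentiable (by norm_num)
  have hL₂ : ∀ j, Differentiable ℝ (pd j (pd j L)) :=
    fun j => ((hL.pd (n := 2) j).pd (n := 1) j).differentiable one_ne_zero
  unfold logBohmPotential
  rw [pd_sum (F := fun j y => pd j L y ^ 2 / 4 + pd j (pd j L) y / 2)
    fun j => by fun_prop, Finset.sum_div]
  refine Finset.sum_congr rfl fun j _ => ?_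
  rw [pd_add (by fun_prop) (by fun_prop), pd_div_const (by fun_prop),
    pd_div_const (hL₂ j x)]
  simp_rw [sq]
  rw [pd_mul (hL₁ j x) (hL₁ j x)]
  ring

/-- Bohm potential identity: `div(ρ ∇² log ρ) = 2 ρ ∇(Δ√ρ / √ρ)` componentwise,
for smooth positive `ρ`. -/
theorem bohm_potential_identity (ρ : (Fin 3 → ℝ) → ℝ)
    (hρ : ContDiff ℝ (⊤ : ℕ∞) ρ) (hpos : ∀ x, 0 < ρ x) :
    ∀ (x : Fin 3 → ℝ) (i : Fin 3),
      (∑ j, pd j (fun y => ρ y * pd i (pd j (fun z => Real.log (ρ z))) y) x)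
        = 2 * ρ x * pd i (fun y =>
            (∑ j, pd j (pd j (fun z => Real.sqrt (ρ z))) y) / Real.sqrt (ρ y)) x := by
  intro x i
  obtain ⟨L, hL, rfl⟩ : ∃ L : (Fin 3 → ℝ) → ℝ, ContDiff ℝ 3 L ∧ ρ = fun y => exp (L y) :=
    ⟨fun y => log (ρ y), (hρ.of_le (WithTop.coe_le_coe.mpr le_top)).log fun y => (hpos y).ne',
      funext fun y => (exp_log (hpos y)).symm⟩
  simp only [log_exp, ← exp_half]
  rw [laplacian_exp_half_div_exp_half (hL.of_le (by norm_num)), pd_logBohmPotential hL,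
    Finset.sum_congr rfl fun j _ => pd_exp_mul_pd_pd hL i j x, ← Finset.mul_sum]
  ring
end

section
/- For a smooth positive function ρ, 2ρ ∇(Δ√ρ/√ρ) = div(2√ρ ∇²√ρ − 2 ∇√ρ ⊗ ∇√ρ) pointwise. -/
open scoped BigOperators

/-!
Write `s = √ρ`, so that `ρ = s²` and the Bohm potential is `Δs / s`. By the quotient rule,
`s² ∂ᵢ(Δs / s) = s ∂ᵢΔs - ∂ᵢs Δs`. On the other side, expanding
`∂ⱼ(s ∂ᵢ∂ⱼs - ∂ᵢs ∂ⱼs)` by the product rule, the terms `∂ⱼs ∂ᵢ∂ⱼs` and `∂ⱼ∂ᵢs ∂ⱼs` cancel by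
symmetry of the Hessian and `∂ⱼ∂ᵢ∂ⱼs = ∂ᵢ∂ⱼ∂ⱼs`, leaving `s ∂ᵢ∂ⱼ²s - ∂ᵢs ∂ⱼ²s`; summing over
`j` gives the same expression.
-/

namespace pd

variable {f g : (Fin 3 → ℝ) → ℝ} {i j : Fin 3} {x : Fin 3 → ℝ}

lemma contDiff {m n : WithTop ℕ∞} (hf : ContDiff ℝ n f) (hmn : m + 1 ≤ n) :
    ContDiff ℝ m (pd i f) :=
  (hf.fderiv_right hmn).clm_apply contDiff_const

lemma sub (hf : DifferentiableAt ℝ f x) (hg : DifferentiableAt ℝ g x) :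
    pd i (fun y => f y - g y) x = pd i f x - pd i g x := by
  simp [pd, fderiv_fun_sub hf hg]

lemma mul (hf : DifferentiableAt ℝ f x) (hg : DifferentiableAt ℝ g x) :
    pd i (fun y => f y * g y) x = pd i f x * g x + f x * pd i g x := by
  simp only [pd, fderiv_fun_mul hf hg, FunLike.coe_add, FunLike.coe_smul,
    Pi.add_apply, Pi.smul_apply, smul_eq_mul]
  ring

lemma const_mul (c : ℝ) : pd i (fun y => c * f y) x = c * pd i f x := by
  rw [pd, show (fun y => c * f y) = c • f from rfl, fderiv_const_smul_field]
  rfl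

lemma sum {A : Fin 3 → (Fin 3 → ℝ) → ℝ} (hA : ∀ j, DifferentiableAt ℝ (A j) x) :
    pd i (fun y => ∑ j, A j y) x = ∑ j, pd i (A j) x := by
  simp [pd, fderiv_fun_sum fun j _ => hA j]

lemma inv (hf : DifferentiableAt ℝ f x) (hfx : f x ≠ 0) :
    pd i (fun y => (f y)⁻¹) x = -pd i f x / f x ^ 2 := by
  have h : HasFDerivAt (fun y => (f y)⁻¹) ((-(f x ^ 2)⁻¹) • fderiv ℝ f x) x :=
    (hasDerivAt_inv hfx).comp_hasFDerivAt x hf.hasFDerivAt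
  simp [pd, h.fderiv, div_eq_inv_mul]

lemma div (hf : DifferentiableAt ℝ f x) (hg : DifferentiableAt ℝ g x) (hgx : g x ≠ 0) :
    pd i (fun y => f y / g y) x = (pd i f x * g x - f x * pd i g x) / g x ^ 2 := by
  simp only [div_eq_mul_inv]
  rw [mul hf (hg.fun_inv hgx), inv hg hgx]
  field_simp
  ring

lemma pd_eq_fderiv_fderiv (hf : ContDiffAt ℝ 2 f x) :
    pd i (pd j f) x = fderiv ℝ (fderiv ℝ f) x (Pi.single i 1) (Pi.single j 1) := by
  have hf' : DifferentiableAt ℝ (fderiv ℝ f) x :=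
    (hf.fderiv_right (m := 1) le_rfl).differentiableAt one_ne_zero
  unfold pd
  rw [fderiv_clm_apply hf' (differentiableAt_const _)]
  simp

lemma comm (hf : ContDiffAt ℝ 2 f x) : pd i (pd j f) x = pd j (pd i f) x := by
  rw [pd_eq_fderiv_fderiv hf, pd_eq_fderiv_fderiv hf]
  exact hf.isSymmSndFDerivAt (by simp) _ _

end pd

section Bohm

variable {s N : (Fin 3 → ℝ) → ℝ} {x : Fin 3 → ℝ}

lemma pd_mul_pd_pd_sub_pd_mul_pd (hs : ContDiff ℝ 3 s) (i j : Fin 3) :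
    pd j (fun y => s y * pd i (pd j s) y - pd i s y * pd j s y) x
      = s x * pd i (pd j (pd j s)) x - pd i s x * pd j (pd j s) x := by
  have hs₁ (k : Fin 3) : ContDiff ℝ 2 (pd k s) := pd.contDiff hs (by norm_num)
  have hs₂ (k l : Fin 3) : ContDiff ℝ 1 (pd k (pd l s)) := pd.contDiff (hs₁ l) (by norm_num)
  have hd {n : WithTop ℕ∞} {f : (Fin 3 → ℝ) → ℝ} (hf : ContDiff ℝ n f) (hn : n ≠ 0) :
      DifferentiableAt ℝ f x :=
    (hf.differentiable hn).differentiableAt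
  rw [pd.sub ((hd hs (by simp)).fun_mul (hd (hs₂ i j) one_ne_zero))
      ((hd (hs₁ i) two_ne_zero).fun_mul (hd (hs₁ j) two_ne_zero)),
    pd.mul (hd hs (by simp)) (hd (hs₂ i j) one_ne_zero),
    pd.mul (hd (hs₁ i) two_ne_zero) (hd (hs₁ j) two_ne_zero),
    pd.comm (hs₁ j).contDiffAt, pd.comm (hs.of_le (by norm_num)).contDiffAt (i := j)]
  ring

lemma sum_pd_mul_pd_pd_sub_pd_mul_pd (hs : ContDiff ℝ 3 s) (i : Fin 3) :
    ∑ j, pd j (fun y => s y * pd i (pd j s) y - pd i s y * pd j s y) x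
      = s x * pd i (fun y => ∑ j, pd j (pd j s) y) x - pd i s x * ∑ j, pd j (pd j s) x := by
  have hs₂ (j : Fin 3) : ContDiff ℝ 1 (pd j (pd j s)) :=
    pd.contDiff (pd.contDiff hs (m := 2) (by norm_num)) (by norm_num)
  rw [pd.sum fun j => ((hs₂ j).differentiable one_ne_zero).differentiableAt,
    Finset.mul_sum, Finset.mul_sum, ← Finset.sum_sub_distrib]
  exact Finset.sum_congr rfl fun j _ => pd_mul_pd_pd_sub_pd_mul_pd hs i j

lemma sq_mul_pd_div (hN : DifferentiableAt ℝ N x) (hs : DifferentiableAt ℝ s x) (hsx : s x ≠ 0)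
    (i : Fin 3) :
    s x ^ 2 * pd i (fun y => N y / s y) x = s x * pd i N x - pd i s x * N x := by
  rw [pd.div hN hs hsx]
  field_simp

end Bohm

/-- For smooth positive `ρ`:
`2 ρ ∇(Δ√ρ/√ρ) = div(2 √ρ ∇²√ρ − 2 ∇√ρ ⊗ ∇√ρ)` pointwise (componentwise in `i`),
where `div` acts row-wise on matrix fields. -/
theorem bohm_divergence_form (ρ : (Fin 3 → ℝ) → ℝ)
    (hρ : ContDiff ℝ (⊤ : ℕ∞) ρ) (hpos : ∀ x, 0 < ρ x) :
    ∀ (x : Fin 3 → ℝ) (i : Fin 3),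
      2 * ρ x * pd i (fun y =>
          (∑ j, pd j (pd j (fun z => Real.sqrt (ρ z))) y) / Real.sqrt (ρ y)) x
        = ∑ j, pd j (fun y =>
            2 * Real.sqrt (ρ y) * pd i (pd j (fun z => Real.sqrt (ρ z))) y
              - 2 * pd i (fun z => Real.sqrt (ρ z)) y * pd j (fun z => Real.sqrt (ρ z)) y) x := by
  intro x i
  set s : (Fin 3 → ℝ) → ℝ := fun z => Real.sqrt (ρ z)
  have hs : ContDiff ℝ 3 s := (hρ.sqrt fun y => (hpos y).ne').of_le (WithTop.coe_le_coe.2 le_top)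
  have hΔs : ContDiff ℝ 1 (fun y => ∑ j, pd j (pd j s) y) :=
    ContDiff.sum fun j _ => pd.contDiff (pd.contDiff hs (m := 2) (by norm_num)) le_rfl
  calc 2 * ρ x * pd i (fun y => (∑ j, pd j (pd j s) y) / s y) x
      = 2 * (s x ^ 2 * pd i (fun y => (∑ j, pd j (pd j s) y) / s y) x) := by
        rw [Real.sq_sqrt (hpos x).le]; ring
    _ = 2 * ∑ j, pd j (fun y => s y * pd i (pd j s) y - pd i s y * pd j s y) x := by
        rw [sq_mul_pd_div (hΔs.differentiable one_ne_zero x) (hs.differentiable (by norm_num) x)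
          (Real.sqrt_pos.2 (hpos x)).ne', sum_pd_mul_pd_pd_sub_pd_mul_pd hs]
    _ = _ := by
        rw [Finset.mul_sum]
        refine Finset.sum_congr rfl fun j _ => ?_
        rw [← pd.const_mul]
        congr 1 with y
        ring
end
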